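/- arXiv:1707.07346 — 3 statements merged into one kernel-verified Lean document; each statement's English description precedes it below -/
import Mathlib

section
/- For all real numbers a_-, a, b, b_+ with a_- < a < b < b_+, there exist real numbers α, β, γ and ℓ ∈ (0,1), with β ∈ (a_-, a) ∪ (b, b_+), such that the Möbius transformation T(x) = γ(x − α)/(x − β) satisfies T(a_-) = −1, T(a) = 1, T(b) = ℓ, and T(b_+) = −ℓ. -/
set_option maxHeartbeats 1600000 in
/-- For all real numbers `a₋ < a < b < b₊`, there exist real parameters `α, β, γ` and
`ℓ ∈ (0,1)`, with `β ∈ (a₋, a) ∪ (b, b₊)`, such that the Möbius transformation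
`T(x) = γ (x − α)/(x − β)` satisfies `T(a₋) = −1`, `T(a) = 1`, `T(b) = ℓ`, `T(b₊) = −ℓ`. -/
theorem mobius_transformation_exists (aminus a b bplus : ℝ)
    (h1 : aminus < a) (h2 : a < b) (h3 : b < bplus) :
    ∃ (α β γ ℓ : ℝ), ℓ ∈ Set.Ioo (0 : ℝ) 1 ∧
      β ∈ Set.Ioo aminus a ∪ Set.Ioo b bplus ∧
      γ * (aminus - α) / (aminus - β) = -1 ∧
      γ * (a - α) / (a - β) = 1 ∧
      γ * (b - α) / (b - β) = ℓ ∧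
      γ * (bplus - α) / (bplus - β) = -ℓ := by
  have hd : (0:ℝ) < (b + bplus) - (aminus + a) := by linarith
  -- midpoint m of the two roots, chosen so both symmetry conditions match
  obtain ⟨m, hma, hmb, hPP⟩ : ∃ m : ℝ, a < m ∧ m < b ∧
      (aminus + a) * m - aminus * a = (b + bplus) * m - b * bplus := by
    refine ⟨(b * bplus - aminus * a) / ((b + bplus) - (aminus + a)), ?_, ?_, ?_⟩
    · rw [lt_div_iff₀ hd]; nlinarith
    · rw [div_lt_iff₀ hd]; nlinarith
    · field_simp; ring
  -- quarter-discriminant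
  have hDa : (a - m) ^ 2 < m ^ 2 - ((aminus + a) * m - aminus * a) := by nlinarith
  obtain ⟨r, hr0, hr2⟩ : ∃ r : ℝ, 0 ≤ r ∧
      r ^ 2 = m ^ 2 - ((aminus + a) * m - aminus * a) :=
    ⟨Real.sqrt (m ^ 2 - ((aminus + a) * m - aminus * a)), Real.sqrt_nonneg _,
      Real.sq_sqrt (by nlinarith)⟩
  have hr2' : r ^ 2 = m ^ 2 - ((b + bplus) * m - b * bplus) := by rw [hr2, hPP]
  have hrpos : 0 < r := by
    rcases hr0.lt_or_eq with h | h
    · exact h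
    · exfalso; nlinarith
  have hβa : m - r < a := by nlinarith
  have hβam : aminus < m - r := by nlinarith
  have hbα : b < m + r := by nlinarith
  have hαbp : m + r < bplus := by nlinarith
  have haα : a - (m + r) < 0 := by nlinarith
  have haβ : (0:ℝ) < a - (m - r) := by nlinarith
  have hamβ : aminus - (m - r) < 0 := by nlinarith
  have hbβ : (0:ℝ) < b - (m - r) := by nlinarith
  have hbα' : b - (m + r) < 0 := by nlinarith
  have hbpβ : (0:ℝ) < bplus - (m - r) := by nlinarith
  refine ⟨m + r, m - r,
    (a - (m - r)) / (a - (m + r)),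
    (a - (m - r)) / (a - (m + r)) * (b - (m + r)) / (b - (m - r)),
    ⟨?_, ?_⟩, Or.inl ⟨hβam, hβa⟩, ?_, ?_, rfl, ?_⟩
  · -- 0 < ℓ
    rw [div_mul_eq_mul_div, div_div]
    exact div_pos_iff.mpr (Or.inr ⟨mul_neg_of_pos_of_neg haβ hbα',
      mul_neg_of_neg_of_pos haα hbβ⟩)
  · -- ℓ < 1
    rw [div_mul_eq_mul_div, div_div]
    have hden : (a - (m + r)) * (b - (m - r)) ≠ 0 :=
      (mul_neg_of_neg_of_pos haα hbβ).ne
    have hE : (a - (m - r)) * (b - (m + r)) / ((a - (m + r)) * (b - (m - r))) *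
        ((a - (m + r)) * (b - (m - r))) = (a - (m - r)) * (b - (m + r)) :=
      div_mul_cancel₀ _ hden
    nlinarith [hE, mul_neg_of_neg_of_pos haα hbβ, mul_pos hrpos (sub_pos.mpr h2)]
  · -- T(aminus) = -1
    rw [div_mul_eq_mul_div, div_div,
      div_eq_iff (mul_ne_zero haα.ne hamβ.ne)]
    linear_combination (-2 : ℝ) * hr2
  · -- T(a) = 1
    rw [div_mul_eq_mul_div, div_div,
      div_eq_iff (mul_ne_zero haα.ne haβ.ne')]
    ring
  · -- T(bplus) = -ℓ
    rw [div_mul_eq_mul_div, div_div, div_mul_eq_mul_div, div_div, ← neg_div,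
      div_eq_div_iff (mul_ne_zero haα.ne hbpβ.ne') (mul_ne_zero haα.ne hbβ.ne')]
    linear_combination ((-2 : ℝ) * (a - (m - r)) * (a - (m + r))) * hr2'
end

section
/- Let a_- < a < b < b_+ be real numbers, and let α, β, γ ∈ ℝ and ℓ ∈ (0,1) satisfy β ∈ (a_-, a), α ∈ (b, b_+), and T(a_-) = −1, T(a) = 1, T(b) = ℓ, T(b_+) = −ℓ, where T(x) = γ(x − α)/(x − β). Then T(x) ∈ [ℓ, 1] for every x ∈ [a, b], and T(x) ∈ [−1, −ℓ] for every x ∈ (−∞, a_-] ∪ [b_+, +∞). -/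
/-- If `a₋ < a < b < b₊`, `ℓ ∈ (0,1)`, `β ∈ (a₋, a)`, `α ∈ (b, b₊)`, and the Möbius
transformation `T(x) = γ (x − α)/(x − β)` satisfies `T(a₋) = −1`, `T(a) = 1`, `T(b) = ℓ`,
`T(b₊) = −ℓ`, then `T(x) ∈ [ℓ, 1]` for every `x ∈ [a, b]` and `T(x) ∈ [−1, −ℓ]` for every
`x ∈ (−∞, a₋] ∪ [b₊, +∞)`. -/
theorem mobius_maps_intervals (aminus a b bplus α β γ ℓ : ℝ)
    (h1 : aminus < a) (h2 : a < b) (h3 : b < bplus)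
    (hℓ : ℓ ∈ Set.Ioo (0 : ℝ) 1)
    (hβ : β ∈ Set.Ioo aminus a) (hα : α ∈ Set.Ioo b bplus)
    (T : ℝ → ℝ) (hT : ∀ x, T x = γ * (x - α) / (x - β))
    (hTaminus : T aminus = -1) (hTa : T a = 1) (hTb : T b = ℓ) (hTbplus : T bplus = -ℓ) :
    (∀ x ∈ Set.Icc a b, T x ∈ Set.Icc ℓ 1) ∧
    (∀ x ∈ Set.Iic aminus ∪ Set.Ici bplus, T x ∈ Set.Icc (-1) (-ℓ)) := by
  obtain ⟨hβ1, hβ2⟩ := hβ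
  obtain ⟨hα1, hα2⟩ := hα
  obtain ⟨hℓ0, hℓ1⟩ := hℓ
  have d1 : aminus - β ≠ 0 := by linarith
  have d2 : a - β ≠ 0 := by linarith
  have d3 : b - β ≠ 0 := by linarith
  have d4 : bplus - β ≠ 0 := by linarith
  rw [hT, div_eq_iff d1] at hTaminus
  rw [hT, div_eq_iff d2] at hTa
  rw [hT, div_eq_iff d3] at hTb
  rw [hT, div_eq_iff d4] at hTbplus
  -- γ bounds
  have hg1 : (γ + 1) * (a - aminus) = 2 * (a - β) := by linear_combination hTa - hTaminus
  have hg2 : (γ + ℓ) * (bplus - b) = 2 * ℓ * (β - b) := by linear_combination hTbplus - hTb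
  have hγ1 : 0 < γ + 1 := by nlinarith
  have hγ2 : γ + ℓ < 0 := by nlinarith
  constructor
  · intro x hx
    obtain ⟨hxa, hxb⟩ := hx
    have hxβ : 0 < x - β := by linarith
    have k1 : (b - a) * (γ * (x - α) - ℓ * (x - β)) = (b - x) * ((1 - ℓ) * (a - β)) := by
      linear_combination (b - x) * hTa + (x - a) * hTb
    have k2 : (b - a) * ((x - β) - γ * (x - α)) = (x - a) * ((1 - ℓ) * (b - β)) := by
      linear_combination (x - b) * hTa - (x - a) * hTb
    rw [hT]
    constructor
    · rw [le_div_iff₀ hxβ]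
      nlinarith [mul_nonneg (by linarith : (0:ℝ) ≤ b - x) (by nlinarith : (0:ℝ) ≤ (1 - ℓ) * (a - β))]
    · rw [div_le_iff₀ hxβ]
      nlinarith [mul_nonneg (by linarith : (0:ℝ) ≤ x - a) (by nlinarith : (0:ℝ) ≤ (1 - ℓ) * (b - β))]
  · intro x hx
    rw [hT]
    rcases hx with hx | hx
    · have hxβ : x - β < 0 := by simp at hx; linarith
      simp only [Set.mem_Iic] at hx
      have k1 : γ * (x - α) + (x - β) = (γ + 1) * (x - aminus) := by
        linear_combination hTaminus
      have k2 : γ * (x - α) + ℓ * (x - β) = (γ + ℓ) * (x - aminus) + (ℓ - 1) * (aminus - β) := by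
        linear_combination hTaminus
      have p : 0 < (ℓ - 1) * (aminus - β) := by
        have := mul_pos (by linarith : (0:ℝ) < 1 - ℓ) (by linarith : (0:ℝ) < β - aminus)
        nlinarith
      constructor
      · rw [le_div_iff_of_neg hxβ]
        linarith [k1, mul_nonpos_of_nonneg_of_nonpos (le_of_lt hγ1) (by linarith : x - aminus ≤ 0)]
      · rw [div_le_iff_of_neg hxβ]
        linarith [k2, p, mul_nonneg (neg_nonneg.2 (le_of_lt hγ2)) (by linarith : (0:ℝ) ≤ aminus - x)]
    · simp only [Set.mem_Ici] at hx
      have hxβ : 0 < x - β := by linarith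
      have k1 : γ * (x - α) + (x - β) = (γ + 1) * (x - bplus) + (1 - ℓ) * (bplus - β) := by
        linear_combination hTbplus
      have k2 : γ * (x - α) + ℓ * (x - β) = (γ + ℓ) * (x - bplus) := by
        linear_combination hTbplus
      have p : 0 < (1 - ℓ) * (bplus - β) := by
        apply mul_pos <;> linarith
      constructor
      · rw [le_div_iff₀ hxβ]
        linarith [k1, p, mul_nonneg (le_of_lt hγ1) (by linarith : (0:ℝ) ≤ x - bplus)]
      · rw [div_le_iff₀ hxβ]
        linarith [k2, mul_nonpos_of_nonpos_of_nonneg (le_of_lt hγ2) (by linarith : (0:ℝ) ≤ x - bplus)]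
end

section
/- Let A be a p×q real matrix of rank r and let k ≥ r. With respect to the probability measure on q×k real matrices under which all entries are independent standard Gaussian random variables, for almost every R the column space of the product A·R equals the column space of A; in particular, rank(A·R) = r almost surely. -/
/-!
The columns of a standard Gaussian `q × k` matrix are i.i.d. standard Gaussian vectors
in `ℝ^q`, and their law charges no proper subspace. If `A x₁, …, A xⱼ` are linearly
independent and `j < rank A`, their span `V` is a proper subspace of `range A`, so `A⁻¹ V`
is a proper subspace of `ℝ^q` and `A xⱼ₊₁ ∉ V` almost surely. By induction the first `r`
columns of `A R` are almost surely linearly independent; lying in the `r`-dimensional space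
`range A`, they span it.
-/

open MeasureTheory ProbabilityTheory Module

namespace MeasureTheory.Measure

theorem AbsolutelyContinuous.pi_fin {n : ℕ} {α : Fin n → Type*} [∀ i, MeasurableSpace (α i)]
    {μ ν : ∀ i, Measure (α i)} [∀ i, SigmaFinite (μ i)] [∀ i, SigmaFinite (ν i)]
    (h : ∀ i, μ i ≪ ν i) : Measure.pi μ ≪ Measure.pi ν := by
  induction n with
  | zero => rw [pi_of_empty μ, pi_of_empty ν]
  | succ n ih =>
    rw [← (measurePreserving_piFinSuccAbove μ 0).symm.map_eq,
      ← (measurePreserving_piFinSuccAbove ν 0).symm.map_eq]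
    exact ((h 0).prod (ih fun i => h _)).map (MeasurableEquiv.measurable _)

theorem AbsolutelyContinuous.pi {ι : Type*} [Fintype ι] {α : ι → Type*}
    [∀ i, MeasurableSpace (α i)] {μ ν : ∀ i, Measure (α i)} [∀ i, SigmaFinite (μ i)]
    [∀ i, SigmaFinite (ν i)] (h : ∀ i, μ i ≪ ν i) : Measure.pi μ ≪ Measure.pi ν := by
  let e := (Fintype.equivFin ι).symm
  rw [← (measurePreserving_piCongrLeft μ e).map_eq,
    ← (measurePreserving_piCongrLeft ν e).map_eq]
  exact (AbsolutelyContinuous.pi_fin fun i => h (e i)).map (MeasurableEquiv.measurable _)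

theorem pi_map_curry {ι κ X : Type*} [Fintype ι] [Fintype κ] [MeasurableSpace X]
    (μ : Measure X) [IsProbabilityMeasure μ] :
    (Measure.pi fun _ : ι × κ => μ).map (MeasurableEquiv.curry ι κ X) =
      Measure.pi fun _ : ι => Measure.pi fun _ : κ => μ := by
  simpa only [infinitePi_eq_pi] using infinitePi_map_curry fun (_ : ι) (_ : κ) => μ

theorem pi_map_swap {ι κ X : Type*} [Fintype ι] [Fintype κ] [MeasurableSpace X]
    (μ : Measure X) [IsProbabilityMeasure μ] :
    (Measure.pi fun _ : ι => Measure.pi fun _ : κ => μ).map Function.swap =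
      Measure.pi fun _ : κ => Measure.pi fun _ : ι => μ := by
  have hswap : (Function.swap : (ι → κ → X) → κ → ι → X) =
      MeasurableEquiv.curry κ ι X ∘
        MeasurableEquiv.piCongrLeft (fun _ => X) (Equiv.prodComm ι κ) ∘
          (MeasurableEquiv.curry ι κ X).symm := by
    ext f j i
    simp [MeasurableEquiv.piCongrLeft, Equiv.piCongrLeft]
  rw [hswap, ← map_map (by fun_prop) (by fun_prop), ← map_map (by fun_prop) (by fun_prop),
    ← pi_map_curry, MeasurableEquiv.map_symm_map,
    (measurePreserving_piCongrLeft (fun _ => μ) (Equiv.prodComm ι κ)).map_eq, pi_map_curry]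

end MeasureTheory.Measure

theorem MeasureTheory.measurePreserving_comp_castLE {α : Type*} [MeasurableSpace α]
    (μ : Measure α) [IsProbabilityMeasure μ] {r k : ℕ} (h : r ≤ k) :
    MeasurePreserving (fun x : Fin k → α => x ∘ Fin.castLE h)
      (Measure.pi fun _ => μ) (Measure.pi fun _ => μ) := by
  induction k, h using Nat.le_induction with
  | base => exact MeasurePreserving.id _
  | succ k h ih =>
    have hinit := measurePreserving_snd.comp
      (measurePreserving_piFinSuccAbove (fun _ : Fin (k + 1) => μ) (Fin.last k))
    convert ih.comp hinit using 1
    funext x i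
    simp [MeasurableEquiv.piFinSuccAbove, Fin.init]

theorem ae_apply_notMem_of_lt_range {K E F : Type*} [Ring K] [AddCommGroup E] [Module K E]
    [AddCommGroup F] [Module K F] [MeasurableSpace E] {ν : Measure E}
    (hν : ∀ S : Submodule K E, S ≠ ⊤ → ν S = 0) {L : E →ₗ[K] F} {V : Submodule K F}
    (hV : V < LinearMap.range L) : ∀ᵐ x ∂ν, L x ∉ V := by
  have hproper : V.comap L ≠ ⊤ := fun htop =>
    hV.not_ge (LinearMap.range_le_iff_comap.mpr htop)
  simp only [ae_iff, not_not]
  exact hν _ hproper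

theorem ae_linearIndependent_comp {E F : Type*} [NormedAddCommGroup E] [NormedSpace ℝ E]
    [FiniteDimensional ℝ E] [MeasurableSpace E] [BorelSpace E] [NormedAddCommGroup F]
    [NormedSpace ℝ F] {ν : Measure E} [SigmaFinite ν]
    (hν : ∀ S : Submodule ℝ E, S ≠ ⊤ → ν S = 0) (L : E →ₗ[ℝ] F) {k : ℕ}
    (hk : k ≤ finrank ℝ (LinearMap.range L)) :
    ∀ᵐ x ∂(Measure.pi fun _ : Fin k => ν), LinearIndependent ℝ (L ∘ x) := by
  induction k with
  | zero => exact ae_of_all _ fun x => linearIndependent_empty_type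
  | succ k ih =>
    have hmeas :
        MeasurableSet {y : E × (Fin k → E) | LinearIndependent ℝ (L ∘ Fin.cons y.1 y.2)} :=
      (isOpen_setOfPred_linearIndependent.preimage (by fun_prop)).measurableSet
    rw [← (measurePreserving_piFinSuccAbove (fun _ => ν) 0).symm.map_eq,
      (MeasurableEquiv.measurableEmbedding _).ae_map_iff]
    simp only [MeasurableEquiv.piFinSuccAbove_symm_apply, Fin.insertNthEquiv, Equiv.coe_fn_mk,
      Fin.insertNth_zero']
    rw [Measure.ae_prod_iff_ae_ae hmeas, Measure.ae_ae_comm (by simpa using hmeas)]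
    filter_upwards [ih (by omega)] with x hx
    have hspan : Submodule.span ℝ (Set.range (L ∘ x)) < LinearMap.range L := by
      refine lt_of_le_of_ne (Submodule.span_le.mpr (Set.range_comp_subset_range _ _)) ?_
      intro heq
      have hrank := finrank_span_eq_card hx
      rw [heq, Fintype.card_fin] at hrank
      omega
    filter_upwards [ae_apply_notMem_of_lt_range hν hspan] with x₀ hx₀
    rw [Fin.comp_cons, linearIndependent_finCons]
    exact ⟨hx, hx₀⟩

namespace Matrix

theorem range_mulVecLin_mul_eq_of_linearIndependent {m n o K : Type*} [Fintype m]
    [Fintype n] [Fintype o] [Field K] (A : Matrix m n K) (B : Matrix n o K) (g : Fin A.rank → o)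
    (hg : LinearIndependent K fun i => A *ᵥ B.col (g i)) :
    LinearMap.range (A * B).mulVecLin = LinearMap.range A.mulVecLin := by
  have hle : LinearMap.range (A * B).mulVecLin ≤ LinearMap.range A.mulVecLin := by
    rw [mulVecLin_mul]
    exact LinearMap.range_comp_le_range _ _
  have hspan : Submodule.span K (Set.range fun i => A *ᵥ B.col (g i)) ≤
      LinearMap.range (A * B).mulVecLin := by
    rw [range_mulVecLin, Submodule.span_le]
    rintro - ⟨i, rfl⟩
    exact Submodule.subset_span ⟨g i, rfl⟩
  refine Submodule.eq_of_le_of_finrank_le hle ?_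
  calc finrank K (LinearMap.range A.mulVecLin) = A.rank := rfl
    _ = finrank K (Submodule.span K (Set.range fun i => A *ᵥ B.col (g i))) := by
      rw [finrank_span_eq_card hg, Fintype.card_fin]
    _ ≤ _ := Submodule.finrank_mono hspan

end Matrix

theorem pi_gaussianReal_submodule_eq_zero {ι : Type*} [Fintype ι] (m : ℝ) {v : NNReal}
    (hv : v ≠ 0) {S : Submodule ℝ (ι → ℝ)} (hS : S ≠ ⊤) :
    Measure.pi (fun _ : ι => gaussianReal m v) S = 0 := by
  have hac : Measure.pi (fun _ : ι => gaussianReal m v) ≪ volume :=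
    Measure.AbsolutelyContinuous.pi fun _ => gaussianReal_absolutelyContinuous m hv
  exact hac (Measure.addHaar_submodule volume S hS)

/-- Randomized range finder: if `A` is a `p × q` real matrix of rank `r` and `k ≥ r`, then
for almost every `q × k` matrix `R` with i.i.d. standard Gaussian entries, the column space
of `A·R` equals the column space of `A`; in particular `rank(A·R) = r` almost surely. -/
theorem randomized_range_finder (p q k r : ℕ)
    (A : Matrix (Fin p) (Fin q) ℝ) (hA : A.rank = r) (hk : r ≤ k) :
    ∀ᵐ R ∂(Measure.pi fun _ : Fin q => Measure.pi fun _ : Fin k => gaussianReal 0 1),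
      LinearMap.range (A * Matrix.of R).mulVecLin = LinearMap.range A.mulVecLin ∧
      (A * Matrix.of R).rank = r := by
  subst hA
  let γ := Measure.pi fun _ : Fin q => gaussianReal 0 1
  have hind : ∀ᵐ x ∂(Measure.pi fun _ : Fin A.rank => γ),
      LinearIndependent ℝ (A.mulVecLin ∘ x) :=
    ae_linearIndependent_comp (fun _ => pi_gaussianReal_submodule_eq_zero 0 one_ne_zero)
      A.mulVecLin le_rfl
  have hcols : ∀ᵐ x ∂(Measure.pi fun _ : Fin k => γ),
      LinearIndependent ℝ (A.mulVecLin ∘ x ∘ Fin.castLE hk) :=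
    (measurePreserving_comp_castLE γ hk).quasiMeasurePreserving.ae hind
  -- `Function.swap R` is the family of columns of `Matrix.of R`.
  have hswap : MeasurePreserving Function.swap
      (Measure.pi fun _ : Fin q => Measure.pi fun _ : Fin k => gaussianReal 0 1)
      (Measure.pi fun _ : Fin k => γ) :=
    ⟨by fun_prop, Measure.pi_map_swap _⟩
  filter_upwards [hswap.quasiMeasurePreserving.ae hcols] with R hR
  have hrange := Matrix.range_mulVecLin_mul_eq_of_linearIndependent A (Matrix.of R) _ hR
  exact ⟨hrange, congrArg (fun V : Submodule ℝ (Fin p → ℝ) => finrank ℝ V) hrange⟩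
end
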